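/- arXiv:2301.04097 — 2 statements merged into one kernel-verified Lean document; each statement's English description precedes it below -/
import Mathlib

section
/- Let q ≥ 1 be a real number that is not an integer. Then for all real x ≥ −1: (1+x)^q ≤ 1 + Σ_{k=1}^{⌊q⌋} [q(q−1)⋯(q−k+1)/k!]·x^k + |x|^q, where ⌊q⌋ is the integer part of q. -/
noncomputable section

open Real

/-- The generalized binomial-type coefficient `q(q-1)⋯(q-k+1)/k!`. -/
def genBinom (q : ℝ) (k : ℕ) : ℝ :=
  (∏ i ∈ Finset.range k, (q - i)) / (Nat.factorial k)

namespace RpowAux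

/-- Partial Taylor sum of `(1+x)^q` up to degree `n`. -/
def S (q : ℝ) (n : ℕ) (x : ℝ) : ℝ := ∑ k ∈ Finset.range (n + 1), genBinom q k * x ^ k

lemma genBinom_zero (q : ℝ) : genBinom q 0 = 1 := by simp [genBinom]

lemma succ_mul_genBinom (q : ℝ) (k : ℕ) :
    ((k : ℝ) + 1) * genBinom q (k + 1) = q * genBinom (q - 1) k := by
  have h1 : ∏ i ∈ Finset.range (k + 1), (q - (i : ℝ)) =
      (∏ i ∈ Finset.range k, (q - 1 - (i : ℝ))) * q := by
    rw [Finset.prod_range_succ']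
    congr 1
    · apply Finset.prod_congr rfl
      intro i _
      push_cast
      ring
    · norm_num
  have hfac : (Nat.factorial (k + 1) : ℝ) = ((k : ℝ) + 1) * (Nat.factorial k : ℝ) := by
    rw [Nat.factorial_succ]; push_cast; ring
  have hk : ((k : ℝ) + 1) ≠ 0 := by positivity
  have hf : (Nat.factorial k : ℝ) ≠ 0 := by
    exact_mod_cast Nat.factorial_ne_zero k
  rw [genBinom, genBinom, h1, hfac]
  field_simp

lemma S_zero (q : ℝ) (m : ℕ) : S q m 0 = 1 := by
  rw [S, Finset.sum_eq_single 0]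
  · simp [genBinom_zero]
  · intro k _ hk; simp [zero_pow hk]
  · intro h; exact absurd (Finset.mem_range.mpr (Nat.succ_pos m)) h

lemma continuous_S (q : ℝ) (m : ℕ) : Continuous (S q m) :=
  continuous_finset_sum _ fun k _ => continuous_const.mul (continuous_pow k)

lemma hasDerivAt_S (q : ℝ) (n : ℕ) (x : ℝ) :
    HasDerivAt (S q (n + 1)) (q * S (q - 1) n x) x := by
  have h : HasDerivAt (fun y => ∑ k ∈ Finset.range (n + 2), genBinom q k * y ^ k)
      (∑ k ∈ Finset.range (n + 2), genBinom q k * ((k : ℝ) * x ^ (k - 1))) x :=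
    HasDerivAt.fun_sum fun k _ => (hasDerivAt_pow k x).const_mul _
  have heq : (∑ k ∈ Finset.range (n + 2), genBinom q k * ((k : ℝ) * x ^ (k - 1)))
      = q * S (q - 1) n x := by
    rw [Finset.sum_range_succ']
    simp only [Nat.cast_zero, zero_mul, mul_zero, add_zero, Nat.add_sub_cancel]
    rw [S, Finset.mul_sum]
    apply Finset.sum_congr rfl
    intro k _
    push_cast
    linear_combination x ^ k * succ_mul_genBinom q k
  rw [← heq]
  exact h

lemma hasDerivAt_base {q : ℝ} (hq : 1 ≤ q) (x : ℝ) :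
    HasDerivAt (fun y : ℝ => (1 + y) ^ q) (q * (1 + x) ^ (q - 1)) x := by
  have h := (Real.hasDerivAt_rpow_const (x := 1 + x) (p := q) (Or.inr hq)).comp x
    ((hasDerivAt_id x).const_add 1)
  simpa [Function.comp_def] using h

lemma hasDerivAt_abs_rpow {q : ℝ} (x : ℝ) (hx : x ≠ 0) :
    HasDerivAt (fun y : ℝ => |y| ^ q) (Real.sign x * (q * |x| ^ (q - 1))) x := by
  rcases hx.lt_or_gt with h | h
  · have h1 : HasDerivAt (fun y : ℝ => (-y) ^ q) ((q * (-x) ^ (q - 1)) * (-1)) x :=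
      (Real.hasDerivAt_rpow_const (x := -x) (p := q)
        (Or.inl (neg_ne_zero.mpr hx))).comp x (hasDerivAt_neg x)
    have h2 : (fun y : ℝ => |y| ^ q) =ᶠ[nhds x] fun y => (-y) ^ q := by
      filter_upwards [Iio_mem_nhds h] with y hy
      rw [abs_of_neg hy]
    have h3 := h1.congr_of_eventuallyEq h2
    refine h3.congr_deriv ?_
    rw [Real.sign_of_neg h, abs_of_neg h]
    ring
  · have h1 : HasDerivAt (fun y : ℝ => y ^ q) (q * x ^ (q - 1)) x :=
      Real.hasDerivAt_rpow_const (Or.inl hx)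
    have h2 : (fun y : ℝ => |y| ^ q) =ᶠ[nhds x] fun y => y ^ q := by
      filter_upwards [Ioi_mem_nhds h] with y hy
      rw [abs_of_pos hy]
    have h3 := h1.congr_of_eventuallyEq h2
    refine h3.congr_deriv ?_
    rw [Real.sign_of_pos h, abs_of_pos h]
    ring

lemma continuous_abs_rpow {q : ℝ} (hq : 0 ≤ q) : Continuous fun y : ℝ => |y| ^ q := by
  rw [continuous_iff_continuousAt]
  intro y
  exact (Real.continuousAt_rpow_const |y| q (Or.inr hq)).comp continuous_abs.continuousAt

lemma continuous_base {q : ℝ} (hq : 0 ≤ q) : Continuous fun y : ℝ => (1 + y) ^ q := by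
  rw [continuous_iff_continuousAt]
  intro y
  exact (Real.continuousAt_rpow_const (1 + y) q (Or.inr hq)).comp
    (continuous_const.add continuous_id).continuousAt

/-- If `f 0 = 0`, `f' ≥ 0` on `(0,∞)` and `f' ≤ 0` on `(-1,0)`, then `f ≥ 0` on `[-1,∞)`. -/
lemma nonneg_of_deriv (f f' : ℝ → ℝ) (hc : Continuous f) (hf0 : f 0 = 0)
    (hd : ∀ x : ℝ, x ≠ 0 → HasDerivAt f (f' x) x)
    (hpos : ∀ x : ℝ, 0 < x → 0 ≤ f' x)
    (hneg : ∀ x : ℝ, -1 < x → x < 0 → f' x ≤ 0) :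
    ∀ x : ℝ, -1 ≤ x → 0 ≤ f x := by
  have hmono : MonotoneOn f (Set.Ici (0 : ℝ)) := by
    apply monotoneOn_of_deriv_nonneg (convex_Ici 0) hc.continuousOn
    · intro x hx
      rw [interior_Ici] at hx
      exact ((hd x (ne_of_gt hx)).differentiableAt).differentiableWithinAt
    · intro x hx
      rw [interior_Ici] at hx
      rw [(hd x (ne_of_gt hx)).deriv]
      exact hpos x hx
  have hanti : AntitoneOn f (Set.Icc (-1 : ℝ) 0) := by
    apply antitoneOn_of_deriv_nonpos (convex_Icc _ _) hc.continuousOn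
    · intro x hx
      rw [interior_Icc] at hx
      exact ((hd x (ne_of_lt hx.2)).differentiableAt).differentiableWithinAt
    · intro x hx
      rw [interior_Icc] at hx
      rw [(hd x (ne_of_lt hx.2)).deriv]
      exact hneg x hx.1 hx.2
  intro x hx
  rcases le_or_gt 0 x with h | h
  · have := hmono (Set.mem_Ici.mpr le_rfl) (Set.mem_Ici.mpr h) h
    linarith [hf0 ▸ this]
  · have := hanti (Set.mem_Icc.mpr ⟨hx, h.le⟩) (Set.mem_Icc.mpr ⟨by norm_num, le_rfl⟩) h.le
    linarith [hf0 ▸ this]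

lemma real_subadd {p a b : ℝ} (hp0 : 0 ≤ p) (hp1 : p ≤ 1) (ha : 0 ≤ a) (hb : 0 ≤ b) :
    (a + b) ^ p ≤ a ^ p + b ^ p := by
  have h := NNReal.rpow_add_le_add_rpow a.toNNReal b.toNNReal hp0 hp1
  have h2 := (NNReal.coe_le_coe).2 h
  simp only [NNReal.coe_add, NNReal.coe_rpow, Real.coe_toNNReal _ ha,
    Real.coe_toNNReal _ hb] at h2
  exact h2

lemma key : ∀ n : ℕ, ∀ q : ℝ, (n : ℝ) < q → q < n + 1 → ∀ x : ℝ, -1 ≤ x →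
    (1 + x) ^ q ≤ S q n x + |x| ^ q ∧ S q n x - |x| ^ q ≤ (1 + x) ^ q := by
  intro n
  induction n with
  | zero =>
    intro q hq0 hq1 x hx
    simp only [Nat.cast_zero, zero_add] at hq0 hq1
    have hS : S q 0 x = 1 := by simp [S, genBinom_zero]
    rw [hS]
    rcases le_or_gt 0 x with h | h
    · constructor
      · calc (1 + x) ^ q ≤ 1 ^ q + x ^ q := real_subadd hq0.le hq1.le zero_le_one h
          _ = 1 + |x| ^ q := by rw [Real.one_rpow, abs_of_nonneg h]
      · have h1 : (1 : ℝ) ≤ (1 + x) ^ q := by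
          have := Real.rpow_le_rpow zero_le_one (by linarith : (1:ℝ) ≤ 1 + x) hq0.le
          rwa [Real.one_rpow] at this
        have h2 : 0 ≤ |x| ^ q := Real.rpow_nonneg (abs_nonneg x) q
        linarith
    · constructor
      · have h1 : (1 + x) ^ q ≤ 1 := by
          apply Real.rpow_le_one (by linarith) (by linarith) hq0.le
        have h2 : 0 ≤ |x| ^ q := Real.rpow_nonneg (abs_nonneg x) q
        linarith
      · have h1 : ((1 + x) + (-x)) ^ q ≤ (1 + x) ^ q + (-x) ^ q :=
          real_subadd hq0.le hq1.le (by linarith) (by linarith)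
        have h2 : ((1 + x) + (-x) : ℝ) = 1 := by ring
        rw [h2, Real.one_rpow] at h1
        rw [abs_of_neg h]
        linarith
  | succ n ih =>
    intro q hq0 hq1 x hx
    push_cast at hq0 hq1
    set p := q - 1 with hp
    have hpn : (n : ℝ) < p := by simp [hp]; linarith
    have hpn1 : p < n + 1 := by simp [hp]; linarith
    have hq1' : 1 ≤ q := by have : (0:ℝ) ≤ n := Nat.cast_nonneg n; linarith
    have hqpos : 0 < q := by linarith
    -- upper bound
    have hupper : ∀ y : ℝ, -1 ≤ y → 0 ≤ S q (n + 1) y + |y| ^ q - (1 + y) ^ q := by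
      apply nonneg_of_deriv _
        (fun y => q * S p n y + Real.sign y * (q * |y| ^ (q - 1)) - q * (1 + y) ^ (q - 1))
      · exact ((continuous_S q (n+1)).add (continuous_abs_rpow hqpos.le)).sub
          (continuous_base hqpos.le)
      · rw [S_zero]
        simp [Real.zero_rpow (ne_of_gt hqpos), Real.one_rpow]
      · intro y hy
        exact ((hasDerivAt_S q n y).add (hasDerivAt_abs_rpow y hy)).sub
          (hasDerivAt_base hq1' y)
      · intro y hy
        have h1 := (ih p hpn hpn1 y (by linarith)).1
        rw [Real.sign_of_pos hy]
        have : (1 + y) ^ p ≤ S p n y + |y| ^ p := h1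
        rw [hp] at this ⊢
        nlinarith
      · intro y hy1 hy2
        have h1 := (ih p hpn hpn1 y (by linarith)).2
        rw [Real.sign_of_neg hy2]
        rw [hp] at h1 ⊢
        nlinarith
    -- lower bound
    have hlower : ∀ y : ℝ, -1 ≤ y → 0 ≤ (1 + y) ^ q - S q (n + 1) y + |y| ^ q := by
      apply nonneg_of_deriv _
        (fun y => q * (1 + y) ^ (q - 1) - q * S p n y + Real.sign y * (q * |y| ^ (q - 1)))
      · exact ((continuous_base hqpos.le).sub (continuous_S q (n+1))).add
          (continuous_abs_rpow hqpos.le)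
      · rw [S_zero]
        simp [Real.zero_rpow (ne_of_gt hqpos), Real.one_rpow]
      · intro y hy
        exact ((hasDerivAt_base hq1' y).sub (hasDerivAt_S q n y)).add
          (hasDerivAt_abs_rpow y hy)
      · intro y hy
        have h1 := (ih p hpn hpn1 y (by linarith)).2
        rw [Real.sign_of_pos hy]
        rw [hp] at h1 ⊢
        nlinarith
      · intro y hy1 hy2
        have h1 := (ih p hpn hpn1 y (by linarith)).1
        rw [Real.sign_of_neg hy2]
        rw [hp] at h1 ⊢
        nlinarith
    constructor
    · linarith [hupper x hx]
    · linarith [hlower x hx]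

end RpowAux

/-- **Elementary pointwise expansion inequality for non-integer powers.** -/
theorem rpow_one_add_le (q : ℝ) (hq : 1 ≤ q) (hqi : ¬∃ z : ℤ, q = (z : ℝ))
    (x : ℝ) (hx : -1 ≤ x) :
    (1 + x) ^ q ≤ 1 + (∑ k ∈ Finset.Icc 1 ⌊q⌋₊, genBinom q k * x ^ k) + |x| ^ q := by
  set n := ⌊q⌋₊ with hn
  have hq0 : (0 : ℝ) ≤ q := by linarith
  have hle : (n : ℝ) ≤ q := Nat.floor_le hq0
  have hne : q ≠ (n : ℝ) := fun h => hqi ⟨(n : ℤ), by exact_mod_cast h⟩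
  have hlt : (n : ℝ) < q := lt_of_le_of_ne hle (Ne.symm hne)
  have hlt1 : q < n + 1 := by exact_mod_cast Nat.lt_floor_add_one q
  have h := (RpowAux.key n q hlt hlt1 x hx).1
  have hS : RpowAux.S q n x = 1 + ∑ k ∈ Finset.Icc 1 n, genBinom q k * x ^ k := by
    rw [RpowAux.S, Finset.range_eq_Ico, Finset.sum_eq_sum_Ico_succ_bot (Nat.succ_pos n)]
    rw [RpowAux.genBinom_zero, Nat.succ_eq_add_one, Finset.Ico_add_one_right_eq_Icc]
    simp
  rw [hS] at h
  linarith
end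
end

section
/- Let n ≥ 1 be an integer, s real with 0 < s < n/2, and q = (n+2s)/n. Then for every m ∈ [0, 1/2]: 1 − m^q − (1−m)^q ≥ (2^q − 2)·m^q. -/
/- Convexity of `x ↦ x ^ q` along the chords from `1/2` to `0` and to `1` bounds `m ^ q` and
`(1 - m) ^ q` linearly in `m`; since `2 ^ q (1/2) ^ q = 1`, the two chord bounds add up to exactly
the claimed inequality. -/

namespace Real

variable {q m : ℝ}

theorem rpow_chord_half_le (hq : 1 ≤ q) {x : ℝ} (hx : 0 ≤ x) (hm0 : 0 ≤ m) (hm : m ≤ 1 / 2) :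
    ((1 - 2 * m) * x + m) ^ q ≤ (1 - 2 * m) * x ^ q + 2 * m * (1 / 2 : ℝ) ^ q := by
  have h := (convexOn_rpow hq).2 (Set.mem_Ici.2 hx) (Set.mem_Ici.2 (by norm_num : (0 : ℝ) ≤ 1 / 2))
    (by linarith : 0 ≤ 1 - 2 * m) (by linarith : 0 ≤ 2 * m) (by ring)
  simp only [smul_eq_mul] at h
  rwa [show 2 * m * (1 / 2 : ℝ) = m by ring] at h

theorem rpow_le_two_mul_half_rpow (hq : 1 ≤ q) (hm0 : 0 ≤ m) (hm : m ≤ 1 / 2) :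
    m ^ q ≤ 2 * m * (1 / 2 : ℝ) ^ q := by
  simpa [zero_rpow (by linarith : q ≠ 0)] using rpow_chord_half_le hq le_rfl hm0 hm

theorem one_sub_rpow_le (hq : 1 ≤ q) (hm0 : 0 ≤ m) (hm : m ≤ 1 / 2) :
    (1 - m) ^ q ≤ 1 - 2 * m + 2 * m * (1 / 2 : ℝ) ^ q := by
  have h := rpow_chord_half_le hq zero_le_one hm0 hm
  rwa [one_rpow, mul_one, show 1 - 2 * m + m = 1 - m by ring] at h

theorem two_pow_sub_two_mul_rpow_le (hq : 1 ≤ q) (hm0 : 0 ≤ m) (hm : m ≤ 1 / 2) :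
    (2 ^ q - 2) * m ^ q ≤ 1 - m ^ q - (1 - m) ^ q := by
  have hinv : (2 : ℝ) ^ q * (1 / 2 : ℝ) ^ q = 1 := by
    rw [← mul_rpow (by norm_num) (by norm_num)]
    norm_num
  have h2q : 0 ≤ (2 : ℝ) ^ q - 1 := by
    linarith [one_le_rpow (by norm_num : (1 : ℝ) ≤ 2) (by linarith : 0 ≤ q)]
  have hmq := mul_le_mul_of_nonneg_left (rpow_le_two_mul_half_rpow hq hm0 hm) h2q
  linear_combination hmq + one_sub_rpow_le hq hm0 hm + 2 * m * hinv

end Real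

theorem one_sub_rpow_ineq_general (n : ℕ) (hn : 1 ≤ n) (s : ℝ) (hs : 0 < s)
    (m : ℝ) (hm0 : 0 ≤ m) (hm : m ≤ 1 / 2) :
    1 - m ^ (((n : ℝ) + 2 * s) / (n : ℝ)) - (1 - m) ^ (((n : ℝ) + 2 * s) / (n : ℝ)) ≥
      ((2 : ℝ) ^ (((n : ℝ) + 2 * s) / (n : ℝ)) - 2) * m ^ (((n : ℝ) + 2 * s) / (n : ℝ)) := by
  have hn0 : (0 : ℝ) < n := by exact_mod_cast hn
  have hq : 1 ≤ ((n : ℝ) + 2 * s) / n := by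
    rw [le_div_iff₀ hn0]
    linarith
  exact Real.two_pow_sub_two_mul_rpow_le hq hm0 hm

/-- **Elementary concavity inequality:** for `q = (n+2s)/n` and `m ∈ [0, 1/2]`,
`1 - m^q - (1-m)^q ≥ (2^q - 2) m^q`. -/
theorem one_sub_rpow_ineq (n : ℕ) (hn : 1 ≤ n) (s : ℝ) (hs : 0 < s)
    (hs' : s < (n : ℝ) / 2) (m : ℝ) (hm0 : 0 ≤ m) (hm : m ≤ 1 / 2) :
    1 - m ^ (((n : ℝ) + 2 * s) / (n : ℝ)) - (1 - m) ^ (((n : ℝ) + 2 * s) / (n : ℝ)) ≥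
      ((2 : ℝ) ^ (((n : ℝ) + 2 * s) / (n : ℝ)) - 2) * m ^ (((n : ℝ) + 2 * s) / (n : ℝ)) :=
  one_sub_rpow_ineq_general n hn s hs m hm0 hm
end
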